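/- Let R : (0, ∞) → ℝ assign to each a > 0 the unique real number r with -1 ≤ r < 0 satisfying r·exp(r) = -a·exp(-a). Then: (R1) for every a > 1, -1 < R(a) < 0, and R is strictly increasing on (1, ∞); (R2) R(1) = -1; (R3) for every k > 0, R(u(k) - k) = k/u(k) - 1, where u(k) is the unique u > 1 with k = u - (ln u)/(1 - 1/u); (R4) for every a > 1, R is differentiable at a with R'(a) = (-R(a)/(R(a) + 1))·((a - 1)/a). -/

import Mathlib

/-!
Both `r ↦ r e^r` on `[-1, ∞)` and `a ↦ a e^{-a}` on `[1, ∞)` are strictly monotone, so `R` is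
pinned down by the equation `R(a) e^{R(a)} = -a e^{-a}` and inherits monotonicity from them.
For (R3), put `t = u - k`: the defining equation of `u` says `t - t/u = log u`, which is exactly
`t/u · e^{-t/u} = t e^{-t}`. For (R4), near `a` the function `R` coincides with the local inverse
of `r ↦ r e^r` composed with `a ↦ -a e^{-a}`, and the chain rule gives the derivative.
-/

open Real Filter Set
open scoped Topology

theorem HasStrictDerivAt.hasDerivAt_of_comp_eventuallyEq {𝕜 : Type*} [NontriviallyNormedField 𝕜]
    [CompleteSpace 𝕜] {φ ψ g : 𝕜 → 𝕜} {φ' ψ' a : 𝕜} {s : Set 𝕜} (hφ : HasStrictDerivAt φ φ' (g a))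
    (hφ' : φ' ≠ 0) (hs : s ∈ 𝓝 (g a)) (hinj : InjOn φ s) (hψ : HasDerivAt ψ ψ' a)
    (hgs : ∀ᶠ x in 𝓝 a, g x ∈ s) (hcomp : φ ∘ g =ᶠ[𝓝 a] ψ) :
    HasDerivAt g (ψ' / φ') a := by
  set L := hφ.localInverse φ φ' (g a) hφ'
  have hL : HasStrictDerivAt L φ'⁻¹ (φ (g a)) := hφ.to_localInverse hφ'
  have hga : φ (g a) = ψ a := hcomp.self_of_nhds
  have hψ_tendsto : Tendsto ψ (𝓝 a) (𝓝 (φ (g a))) := hga ▸ hψ.continuousAt.tendsto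
  have hLg : L (φ (g a)) = g a := (hφ.eventually_left_inverse hφ').self_of_nhds
  have hLψ_tendsto : Tendsto (L ∘ ψ) (𝓝 a) (𝓝 (g a)) :=
    hLg ▸ hL.hasDerivAt.continuousAt.tendsto.comp hψ_tendsto
  have hg_eq : g =ᶠ[𝓝 a] L ∘ ψ := by
    filter_upwards [hψ_tendsto.eventually (hφ.eventually_right_inverse hφ'), hLψ_tendsto hs,
      hgs, hcomp] with x hright hLs hxs hx
    exact hinj hxs hLs (hx.trans hright.symm)
  rw [div_eq_inv_mul]
  exact ((hga ▸ hL.hasDerivAt).comp a hψ).congr_of_eventuallyEq hg_eq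

theorem strictMonoOn_mul_exp : StrictMonoOn (fun x : ℝ => x * exp x) (Ici (-1)) := by
  refine strictMonoOn_of_deriv_pos (convex_Ici _) (by fun_prop) fun x hx => ?_
  rw [interior_Ici, mem_Ioi] at hx
  have hd : HasDerivAt (fun x : ℝ => x * exp x) (1 * exp x + x * exp x) x :=
    (hasDerivAt_id x).mul (hasDerivAt_exp x)
  rw [hd.deriv]
  nlinarith [mul_pos (neg_lt_iff_pos_add.mp hx) (exp_pos x)]

theorem strictAntiOn_mul_exp_neg : StrictAntiOn (fun x : ℝ => x * exp (-x)) (Ici 1) := by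
  refine strictAntiOn_of_deriv_neg (convex_Ici _) (by fun_prop) fun x hx => ?_
  rw [interior_Ici, mem_Ioi] at hx
  have hd : HasDerivAt (fun x : ℝ => x * exp (-x)) (1 * exp (-x) + x * (exp (-x) * -1)) x :=
    (hasDerivAt_id x).mul (hasDerivAt_id x).neg.exp
  rw [hd.deriv]
  nlinarith [mul_pos (sub_pos.mpr hx) (exp_pos (-x))]

theorem div_mul_exp_neg_div_eq {t u : ℝ} (hu : 0 < u) (h : t - t / u = log u) :
    t / u * exp (-(t / u)) = t * exp (-t) := by
  have hexp : exp (-(t / u)) = u * exp (-t) := by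
    rw [show -(t / u) = log u + -t by linarith, exp_add, exp_log hu]
  rw [hexp]
  field_simp

/-- `R a = W₀(-a e^{-a})`, i.e. the root of `r e^r = -a e^{-a}` in `[-1, 0)`. -/
def IsPrincipalLambertW (R : ℝ → ℝ) : Prop :=
  ∀ a : ℝ, 0 < a → -1 ≤ R a ∧ R a < 0 ∧ R a * exp (R a) = -a * exp (-a)

namespace IsPrincipalLambertW

variable {R : ℝ → ℝ} {a r : ℝ}

theorem eq_of_mul_exp_eq (hR : IsPrincipalLambertW R) (ha : 0 < a) (hr : -1 ≤ r)
    (h : r * exp r = -a * exp (-a)) : R a = r := by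
  obtain ⟨hRa, -, hRa_eq⟩ := hR a ha
  exact strictMonoOn_mul_exp.injOn hRa hr (hRa_eq.trans h.symm)

theorem neg_one_lt (hR : IsPrincipalLambertW R) (ha : 1 < a) : -1 < R a := by
  obtain ⟨hRa, -, hRa_eq⟩ := hR a (by linarith)
  refine hRa.lt_of_ne fun h => ?_
  have hψ : a * exp (-a) < 1 * exp (-1) := strictAntiOn_mul_exp_neg self_mem_Ici ha.le ha
  rw [← h] at hRa_eq
  linarith

theorem apply_one (hR : IsPrincipalLambertW R) : R 1 = -1 :=
  hR.eq_of_mul_exp_eq one_pos le_rfl rfl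

theorem strictMonoOn (hR : IsPrincipalLambertW R) : StrictMonoOn R (Ioi 1) := by
  intro a (ha : 1 < a) b (hb : 1 < b) hab
  obtain ⟨hRa, -, hRa_eq⟩ := hR a (by linarith)
  obtain ⟨hRb, -, hRb_eq⟩ := hR b (by linarith)
  have hψ : b * exp (-b) < a * exp (-a) := strictAntiOn_mul_exp_neg ha.le hb.le hab
  refine (strictMonoOn_mul_exp.lt_iff_lt hRa hRb).mp ?_
  simp only [hRa_eq, hRb_eq]
  linarith

theorem apply_sub {k u : ℝ} (hR : IsPrincipalLambertW R) (hk : 0 < k) (hu : 1 < u)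
    (hku : k = u - log u / (1 - 1 / u)) : R (u - k) = k / u - 1 := by
  have hu0 : 0 < u := by linarith
  have ht_eq : u - k = log u / (1 - 1 / u) := by linarith
  have ht_pos : 0 < u - k :=
    ht_eq ▸ div_pos (log_pos hu) (by rw [sub_pos, div_lt_one hu0]; exact hu)
  have ht : u - k - (u - k) / u = log u := by
    have hu1 : u - 1 ≠ 0 := sub_ne_zero.mpr hu.ne'
    rw [ht_eq]
    field_simp
  have hr : -1 ≤ k / u - 1 := by
    have : 0 < k / u := by positivity
    linarith
  refine hR.eq_of_mul_exp_eq ht_pos hr ?_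
  rw [show k / u - 1 = -((u - k) / u) by field_simp; ring]
  linear_combination -div_mul_exp_neg_div_eq hu0 ht

theorem hasDerivAt (hR : IsPrincipalLambertW R) (ha : 1 < a) :
    HasDerivAt R ((-R a / (R a + 1)) * ((a - 1) / a)) a := by
  obtain ⟨-, -, hr_eq⟩ := hR a (by linarith)
  have hr1 : 0 < 1 + R a := by linarith [hR.neg_one_lt ha]
  have hφ : HasStrictDerivAt (fun x => x * exp x) (1 * exp (R a) + R a * exp (R a)) (R a) :=
    (hasStrictDerivAt_id _).mul (hasStrictDerivAt_exp _)
  have hψ : HasDerivAt (fun x => -x * exp (-x)) (-1 * exp (-a) + -a * (exp (-a) * -1)) a :=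
    (hasDerivAt_id a).neg.mul (hasDerivAt_id a).neg.exp
  have hφ' : 1 * exp (R a) + R a * exp (R a) ≠ 0 := by
    rw [← add_mul]
    exact (mul_pos hr1 (exp_pos _)).ne'
  have hgt : ∀ᶠ x in 𝓝 a, 1 < x := eventually_gt_nhds ha
  refine (hφ.hasDerivAt_of_comp_eventuallyEq hφ' (Ioi_mem_nhds (hR.neg_one_lt ha))
    (strictMonoOn_mul_exp.injOn.mono Ioi_subset_Ici_self) hψ
    (hgt.mono fun x hx => hR.neg_one_lt hx)
    (hgt.mono fun x hx => (hR x (by linarith)).2.2)).congr_deriv ?_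
  have ha0 : a ≠ 0 := by linarith
  have hr1' : R a + 1 ≠ 0 := by linarith
  field_simp
  linear_combination ((a - 1) * (R a + 1)) * hr_eq

end IsPrincipalLambertW

/-- Properties of `R(a) = W(-a·e^{-a})` (the value in `[-1, 0)` with
`R(a)·e^{R(a)} = -a·e^{-a}`):
(R1) for `a > 1`, `-1 < R(a) < 0`, and `R` is strictly increasing on `(1, ∞)`;
(R2) `R(1) = -1`;
(R3) for `k > 0`, `R(u(k) - k) = k/u(k) - 1`;
(R4) for `a > 1`, `R` is differentiable at `a` with
`R'(a) = (-R(a)/(R(a)+1))·((a-1)/a)`. -/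
theorem stmt16 (R : ℝ → ℝ)
    (hR : ∀ a : ℝ, 0 < a →
      -1 ≤ R a ∧ R a < 0 ∧ R a * Real.exp (R a) = -a * Real.exp (-a)) :
    (∀ a : ℝ, 1 < a → -1 < R a ∧ R a < 0) ∧
    StrictMonoOn R (Set.Ioi 1) ∧
    R 1 = -1 ∧
    (∀ k u : ℝ, 0 < k → 1 < u → k = u - Real.log u / (1 - 1 / u) →
      R (u - k) = k / u - 1) ∧
    (∀ a : ℝ, 1 < a →
      HasDerivAt R ((-R a / (R a + 1)) * ((a - 1) / a)) a) := by
  have hW : IsPrincipalLambertW R := hR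
  exact ⟨fun a ha => ⟨hW.neg_one_lt ha, (hW a (by linarith)).2.1⟩, hW.strictMonoOn, hW.apply_one,
    fun k u hk hu hku => hW.apply_sub hk hu hku, fun a ha => hW.hasDerivAt ha⟩
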